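/- arXiv:2011.02330 — 2 statements merged into one kernel-verified Lean document; each statement's English description precedes it below -/
import Mathlib

section
/- Let A* be a random vector in {0,1}^d with ‖A*‖_1 = m almost surely (1 ≤ m ≤ d), and let F_1, …, F_T be a filtration of observations. Then ∑_{t=1}^T ∑_{j=1}^d I_t(A*_j; O_t) ≤ ∑_{j=1}^d H(q_j) where q_j = P(A*_j = 1), I_t denotes mutual information under the posterior at time t, O_t is the observation at time t, and H is binary entropy; consequently this sum is at most m·(log(d/m) + 1). -/
attribute [local instance] Classical.propDecidable

/-- Probability of an event on a finite sample space with weight function `μ`. -/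
noncomputable def pr {Ω : Type*} [Fintype Ω] (μ : Ω → ℝ) (E : Ω → Prop) : ℝ :=
  ∑ ω, if E ω then μ ω else 0

/-- Shannon mutual information (natural logarithm) between the discrete random
variables `X` and `Y` on a finite sample space, with the convention `0 · log 0 = 0`. -/
noncomputable def mutInfo {Ω S T : Type*} [Fintype Ω]
    (μ : Ω → ℝ) (X : Ω → S) (Y : Ω → T) : ℝ :=
  ∑ x ∈ Finset.univ.image X, ∑ y ∈ Finset.univ.image Y,
    pr μ (fun ω => X ω = x ∧ Y ω = y) *
      Real.log (pr μ (fun ω => X ω = x ∧ Y ω = y) /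
        (pr μ (fun ω => X ω = x) * pr μ (fun ω => Y ω = y)))


/-- Conditional mutual information `I(X; Y | F)`. -/
noncomputable def condMutInfo {Ω S T U : Type*} [Fintype Ω]
    (μ : Ω → ℝ) (X : Ω → S) (Y : Ω → T) (F : Ω → U) : ℝ :=
  ∑ f ∈ Finset.univ.image F,
    pr μ (fun ω => F ω = f) *
      mutInfo (fun ω => if F ω = f then μ ω / pr μ (fun ω' => F ω' = f) else 0) X Y

/-- Binary entropy function (natural logarithm). -/
noncomputable def binEnt (p : ℝ) : ℝ :=
  -(p * Real.log p) - (1 - p) * Real.log (1 - p)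

/-- The history of observations before time `t`. -/
noncomputable def hist {Ω S : Type*} {T : ℕ} (O : Fin T → Ω → S) (t : Fin T) (ω : Ω) :
    Fin T → Option S :=
  fun s => if (s : ℕ) < (t : ℕ) then some (O s ω) else none

/-!
Write conditional entropy pointwise, `H(X | F) = -∑ ω, μ ω * log P(X = X ω | F = F ω)`, so that it
depends only on the partition generated by `F`. Then `I(X; Y | F) = H(X | F) - H(X | F, Y)`, and
since the history before `t` together with `O t` generates the same partition as the history
before `t + 1`, the information about `A*_j` telescopes to `H(A*_j) - H(A*_j | O_1, …, O_T)`,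
which is at most the binary entropy of `q_j`. The second bound is Jensen's inequality for the
concave `-x log x` at the mean `m / d` of the `q_j`, together with `-(1 - q) log (1 - q) ≤ q`.
-/

open Finset Real

section Probability

variable {Ω : Type*} [Fintype Ω] {μ : Ω → ℝ}

lemma pr_congr {E E' : Ω → Prop} (h : ∀ ω, E ω ↔ E' ω) : pr μ E = pr μ E' := by
  simp only [pr, h]

lemma pr_nonneg (hμ : ∀ ω, 0 ≤ μ ω) (E : Ω → Prop) : 0 ≤ pr μ E :=
  sum_nonneg fun ω _ => ite_nonneg (hμ ω) le_rfl

lemma pr_mono (hμ : ∀ ω, 0 ≤ μ ω) {E E' : Ω → Prop} (h : ∀ ω, E ω → E' ω) :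
    pr μ E ≤ pr μ E' :=
  sum_le_sum fun ω _ => by by_cases hE : E ω <;> by_cases hE' : E' ω <;> simp_all

lemma le_pr_of_mem (hμ : ∀ ω, 0 ≤ μ ω) {E : Ω → Prop} {ω : Ω} (hω : E ω) : μ ω ≤ pr μ E := by
  unfold pr
  simpa [hω] using single_le_sum (f := fun ω => if E ω then μ ω else 0)
    (fun ω _ => ite_nonneg (hμ ω) le_rfl) (mem_univ ω)

lemma pr_true (hsum : ∑ ω, μ ω = 1) : pr μ (fun _ => True) = 1 := by
  simpa [pr] using hsum

lemma pr_le_one (hμ : ∀ ω, 0 ≤ μ ω) (hsum : ∑ ω, μ ω = 1) (E : Ω → Prop) : pr μ E ≤ 1 :=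
  pr_true hsum ▸ pr_mono hμ fun _ _ => trivial

lemma pr_not (hsum : ∑ ω, μ ω = 1) (E : Ω → Prop) : pr μ (fun ω => ¬E ω) = 1 - pr μ E := by
  rw [← pr_true hsum, eq_sub_iff_add_eq]
  simp only [pr, ← sum_add_distrib]
  exact sum_congr rfl fun ω _ => by by_cases h : E ω <;> simp [h]

lemma sum_pr_mul_eq {α : Type*} (V : Ω → α) {s : Finset α} (hs : ∀ ω, V ω ∈ s) (g : α → ℝ) :
    ∑ v ∈ s, pr μ (fun ω => V ω = v) * g v = ∑ ω, μ ω * g (V ω) := by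
  simp only [pr, sum_mul, ite_mul, zero_mul]
  rw [sum_comm]
  exact sum_congr rfl fun ω _ => by simp [hs ω]

lemma sum_pr_eq_of_card_eq {ι : Type*} [Fintype ι] (hsum : ∑ ω, μ ω = 1) (E : ι → Ω → Prop)
    {m : ℕ} (hcard : ∀ ω, μ ω ≠ 0 → #{j | E j ω} = m) :
    ∑ j, pr μ (E j) = m := by
  have hω : ∀ ω, ∑ j, (if E j ω then μ ω else 0) = m * μ ω := fun ω => by
    by_cases h : μ ω = 0
    · simp [h]
    · rw [← sum_filter, sum_const, hcard ω h, nsmul_eq_mul]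
  simp only [pr]
  rw [sum_comm, sum_congr rfl fun ω _ => hω ω, ← mul_sum, hsum, mul_one]

noncomputable def posterior {U : Type*} (μ : Ω → ℝ) (F : Ω → U) (f : U) : Ω → ℝ :=
  fun ω => if F ω = f then μ ω / pr μ (fun ω' => F ω' = f) else 0

lemma pr_posterior {U : Type*} (F : Ω → U) (f : U) (E : Ω → Prop) :
    pr (posterior μ F f) E = pr μ (fun ω => E ω ∧ F ω = f) / pr μ (fun ω => F ω = f) := by
  simp only [pr, posterior, sum_div]
  exact sum_congr rfl fun ω _ => by by_cases hE : E ω <;> by_cases hF : F ω = f <;> simp [hE, hF]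

end Probability

section Entropy

variable {Ω α β U V : Type*} [Fintype Ω] {μ : Ω → ℝ}

noncomputable def condEnt (μ : Ω → ℝ) (X : Ω → α) (F : Ω → U) : ℝ :=
  -∑ ω, μ ω * log (pr μ (fun ω' => X ω' = X ω ∧ F ω' = F ω) / pr μ (fun ω' => F ω' = F ω))

lemma condEnt_nonneg (hμ : ∀ ω, 0 ≤ μ ω) (X : Ω → α) (F : Ω → U) : 0 ≤ condEnt μ X F := by
  refine neg_nonneg.2 (sum_nonpos fun ω _ => mul_nonpos_of_nonneg_of_nonpos (hμ ω) ?_)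
  exact log_nonpos (div_nonneg (pr_nonneg hμ _) (pr_nonneg hμ _))
    (div_le_one_of_le₀ (pr_mono hμ fun _ h => h.2) (pr_nonneg hμ _))

lemma condEnt_congr (X : Ω → α) {F : Ω → U} {G : Ω → V}
    (h : ∀ ω ω', F ω' = F ω ↔ G ω' = G ω) : condEnt μ X F = condEnt μ X G := by
  simp only [condEnt, h]

lemma condEnt_const_eq_binEnt (hsum : ∑ ω, μ ω = 1) (X : Ω → Bool) :
    condEnt μ X (fun _ => ()) = binEnt (pr μ fun ω => X ω = true) := by
  have hfalse : pr μ (fun ω => X ω = false) = 1 - pr μ (fun ω => X ω = true) := by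
    rw [← pr_not hsum]; exact pr_congr fun ω => by simp
  have hlotus := sum_pr_mul_eq (μ := μ) X (s := univ) (fun _ => mem_univ _)
    fun b => log (pr μ fun ω => X ω = b)
  simp only [condEnt, and_true, pr_true hsum, div_one, ← hlotus, Fintype.sum_bool, hfalse,
    binEnt]
  ring

lemma mul_div_mul_log_div_div_mul_div {a b c e : ℝ} (hc : c ≠ 0) :
    c * (a / c * log (a / c / (b / c * (e / c)))) = a * log (a * c / (b * e)) := by
  rw [← mul_assoc, mul_div_cancel₀ _ hc]
  congr 2
  field_simp

lemma condMutInfo_eq_sum_posterior (X : Ω → α) (Y : Ω → β) (F : Ω → U) :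
    condMutInfo μ X Y F =
      ∑ f ∈ univ.image F, pr μ (fun ω => F ω = f) * mutInfo (posterior μ F f) X Y :=
  rfl

lemma condMutInfo_eq_sum (X : Ω → α) (Y : Ω → β) (F : Ω → U) :
    condMutInfo μ X Y F = ∑ ω, μ ω * log
      (pr μ (fun ω' => (X ω' = X ω ∧ Y ω' = Y ω) ∧ F ω' = F ω) * pr μ (fun ω' => F ω' = F ω) /
        (pr μ (fun ω' => X ω' = X ω ∧ F ω' = F ω) * pr μ (fun ω' => Y ω' = Y ω ∧ F ω' = F ω))) := by
  set V : Ω → U × α × β := fun ω => (F ω, X ω, Y ω)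
  set g : U × α × β → ℝ := fun v =>
    log (pr μ (fun ω' => (X ω' = v.2.1 ∧ Y ω' = v.2.2) ∧ F ω' = v.1) * pr μ (fun ω' => F ω' = v.1) /
      (pr μ (fun ω' => X ω' = v.2.1 ∧ F ω' = v.1) * pr μ (fun ω' => Y ω' = v.2.2 ∧ F ω' = v.1)))
  have hV : ∀ ω, V ω ∈ univ.image F ×ˢ univ.image X ×ˢ univ.image Y := by simp [V]
  calc condMutInfo μ X Y F
      = ∑ v ∈ univ.image F ×ˢ univ.image X ×ˢ univ.image Y, pr μ (fun ω => V ω = v) * g v := by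
        simp only [condMutInfo_eq_sum_posterior, mutInfo, mul_sum, sum_product, pr_posterior]
        refine sum_congr rfl fun f _ => sum_congr rfl fun x _ => sum_congr rfl fun y _ => ?_
        have hevent : pr μ (fun ω => V ω = (f, x, y))
            = pr μ (fun ω => (X ω = x ∧ Y ω = y) ∧ F ω = f) :=
          pr_congr fun ω => by simp only [V, Prod.mk.injEq]; tauto
        rw [hevent]
        by_cases hf : pr μ (fun ω => F ω = f) = 0
        · simp [g, hf] -- `log 0 = 0` kills the right-hand side
        · exact mul_div_mul_log_div_div_mul_div hf
    _ = ∑ ω, μ ω * g (V ω) := sum_pr_mul_eq V hV g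

lemma condMutInfo_eq_condEnt_sub (hμ : ∀ ω, 0 ≤ μ ω) (X : Ω → α) (Y : Ω → β) (F : Ω → U) :
    condMutInfo μ X Y F = condEnt μ X F - condEnt μ X (fun ω => (F ω, Y ω)) := by
  rw [condMutInfo_eq_sum, condEnt, condEnt, neg_sub_neg, ← sum_sub_distrib]
  refine sum_congr rfl fun ω _ => ?_
  rw [← mul_sub]
  rcases (hμ ω).eq_or_lt with h0 | hpos
  · simp [← h0]
  have hjoint : pr μ (fun ω' => X ω' = X ω ∧ (F ω', Y ω') = (F ω, Y ω))
      = pr μ (fun ω' => (X ω' = X ω ∧ Y ω' = Y ω) ∧ F ω' = F ω) :=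
    pr_congr fun ω' => by rw [Prod.mk.injEq]; tauto
  have hpair : pr μ (fun ω' => (F ω', Y ω') = (F ω, Y ω))
      = pr μ (fun ω' => Y ω' = Y ω ∧ F ω' = F ω) :=
    pr_congr fun ω' => by rw [Prod.mk.injEq]; tauto
  have hpr : ∀ {E : Ω → Prop}, E ω → pr μ E ≠ 0 :=
    fun hE => (hpos.trans_le (le_pr_of_mem hμ hE)).ne'
  rw [hjoint, hpair]
  have ha : pr μ (fun ω' => (X ω' = X ω ∧ Y ω' = Y ω) ∧ F ω' = F ω) ≠ 0 := hpr ⟨⟨rfl, rfl⟩, rfl⟩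
  have hb : pr μ (fun ω' => X ω' = X ω ∧ F ω' = F ω) ≠ 0 := hpr ⟨rfl, rfl⟩
  have hc : pr μ (fun ω' => F ω' = F ω) ≠ 0 := hpr (E := fun ω' => F ω' = F ω) rfl
  have he : pr μ (fun ω' => Y ω' = Y ω ∧ F ω' = F ω) ≠ 0 := hpr ⟨rfl, rfl⟩
  rw [log_div ha he, log_div hb hc, log_div (mul_ne_zero ha hc) (mul_ne_zero hb he),
    log_mul ha hc, log_mul hb he]
  ring

lemma sum_condMutInfo_eq_condEnt_sub {T : ℕ} (hμ : ∀ ω, 0 ≤ μ ω) (X : Ω → α)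
    (Y : Fin T → Ω → V) (G : ℕ → Ω → U)
    (hG : ∀ (t : Fin T) ω ω', (G t ω', Y t ω') = (G t ω, Y t ω) ↔ G (t + 1) ω' = G (t + 1) ω) :
    ∑ t, condMutInfo μ X (Y t) (G t) = condEnt μ X (G 0) - condEnt μ X (G T) := by
  calc ∑ t, condMutInfo μ X (Y t) (G t)
      = ∑ t : Fin T, (condEnt μ X (G t) - condEnt μ X (G (t + 1))) :=
        sum_congr rfl fun t _ => by
          rw [condMutInfo_eq_condEnt_sub hμ, condEnt_congr X (hG t)]
    _ = condEnt μ X (G 0) - condEnt μ X (G T) := by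
        rw [Fin.sum_univ_eq_sum_range (fun i => condEnt μ X (G i) - condEnt μ X (G (i + 1))),
          sum_range_sub']

end Entropy

section History

variable {Ω S : Type*} {T : ℕ} (O : Fin T → Ω → S)

noncomputable def histBefore (n : ℕ) (ω : Ω) : Fin T → Option S :=
  fun s => if (s : ℕ) < n then some (O s ω) else none

lemma histBefore_eq_iff (n : ℕ) (ω ω' : Ω) :
    histBefore O n ω' = histBefore O n ω ↔ ∀ s : Fin T, (s : ℕ) < n → O s ω' = O s ω := by
  simp only [histBefore, funext_iff]
  refine forall_congr' fun s => ?_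
  by_cases hs : (s : ℕ) < n <;> simp [hs]

lemma histBefore_succ_iff (t : Fin T) (ω ω' : Ω) :
    (histBefore O t ω', O t ω') = (histBefore O t ω, O t ω)
      ↔ histBefore O (t + 1) ω' = histBefore O (t + 1) ω := by
  simp only [Prod.mk.injEq, histBefore_eq_iff, Nat.lt_succ_iff_lt_or_eq]
  grind

end History

lemma binEnt_eq_negMulLog_add (p : ℝ) : binEnt p = negMulLog p + negMulLog (1 - p) := by
  simp only [binEnt, negMulLog]; ring

lemma sum_negMulLog_le {ι : Type*} [Fintype ι] (q : ι → ℝ) (hq : ∀ i, 0 ≤ q i) :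
    ∑ i, negMulLog (q i) ≤ (∑ i, q i) * log (Fintype.card ι / ∑ i, q i) := by
  cases isEmpty_or_nonempty ι
  · simp
  have hd : (0 : ℝ) < Fintype.card ι := by exact_mod_cast Fintype.card_pos
  have jensen := concaveOn_negMulLog.le_map_sum (t := univ) (w := fun _ => (Fintype.card ι : ℝ)⁻¹)
    (p := q) (fun _ _ => by positivity) (by simp [hd.ne']) (fun i _ => hq i)
  simp only [smul_eq_mul, ← mul_sum] at jensen
  rw [← inv_div, log_inv]
  calc ∑ i, negMulLog (q i) = Fintype.card ι * ((Fintype.card ι : ℝ)⁻¹ * ∑ i, negMulLog (q i)) := by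
        field_simp
    _ ≤ Fintype.card ι * negMulLog ((Fintype.card ι : ℝ)⁻¹ * ∑ i, q i) := by gcongr
    _ = (∑ i, q i) * -log ((∑ i, q i) / Fintype.card ι) := by
        simp only [negMulLog]; field_simp

lemma sum_binEnt_le {ι : Type*} [Fintype ι] (q : ι → ℝ) (hq₀ : ∀ i, 0 ≤ q i) (hq₁ : ∀ i, q i ≤ 1) :
    ∑ i, binEnt (q i) ≤ (∑ i, q i) * (log (Fintype.card ι / ∑ i, q i) + 1) := by
  have hcompl : ∑ i, negMulLog (1 - q i) ≤ ∑ i, q i :=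
    sum_le_sum fun i _ => by simpa using negMulLog_le_one_sub_self (sub_nonneg.2 (hq₁ i))
  simp only [binEnt_eq_negMulLog_add, sum_add_distrib]
  linarith [sum_negMulLog_le q hq₀]

lemma sum_condMutInfo_hist_le_binEnt {Ω S : Type*} [Fintype Ω] {μ : Ω → ℝ} {T : ℕ}
    (hμ : ∀ ω, 0 ≤ μ ω) (hsum : ∑ ω, μ ω = 1) (X : Ω → Bool) (O : Fin T → Ω → S) :
    ∑ t, condMutInfo μ X (O t) (hist O t) ≤ binEnt (pr μ fun ω => X ω = true) :=
  calc ∑ t, condMutInfo μ X (O t) (hist O t)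
      = condEnt μ X (histBefore O 0) - condEnt μ X (histBefore O T) :=
        sum_condMutInfo_eq_condEnt_sub hμ X O (histBefore O) (histBefore_succ_iff O)
    _ ≤ condEnt μ X (histBefore O 0) := sub_le_self _ (condEnt_nonneg hμ X _)
    _ = condEnt μ X (fun _ => ()) := condEnt_congr X fun ω ω' => by simp [histBefore_eq_iff]
    _ = binEnt (pr μ fun ω => X ω = true) := condEnt_const_eq_binEnt hsum X

theorem total_information_bound_general {Ω S : Type*} [Fintype Ω]
    (μ : Ω → ℝ) (hμ : ∀ ω, 0 ≤ μ ω) (hsum : ∑ ω, μ ω = 1)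
    (d m T : ℕ)
    (Astar : Ω → Fin d → Bool)
    (hsparse : ∀ ω, μ ω ≠ 0 →
      (Finset.univ.filter fun j => Astar ω j = true).card = m)
    (O : Fin T → Ω → S) :
    (∑ t, ∑ j, condMutInfo μ (fun ω => Astar ω j) (O t) (hist O t))
        ≤ ∑ j, binEnt (pr μ fun ω => Astar ω j = true) ∧
      (∑ j, binEnt (pr μ fun ω => Astar ω j = true))
        ≤ (m : ℝ) * (Real.log ((d : ℝ) / m) + 1) := by
  constructor
  · rw [sum_comm]
    exact sum_le_sum fun j _ => sum_condMutInfo_hist_le_binEnt hμ hsum _ O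
  · have hq : ∑ j, pr μ (fun ω => Astar ω j = true) = m := 
      sum_pr_eq_of_card_eq hsum _ fun ω hω => by convert hsparse ω hω
    simpa [hq] using sum_binEnt_le (fun j => pr μ fun ω => Astar ω j = true)
      (fun j => pr_nonneg hμ _) (fun j => pr_le_one hμ hsum _)

/-- The total information about the coordinates of the `m`-sparse optimum `A*`
accumulated across periods and options is bounded by the sum of the prior binary
entropies, which is at most `m (log(d/m) + 1)`.  Here
`I_t(A*_j; O_t) = I(A*_j; O_t | O_1, …, O_{t-1})` is the mutual information under
the posterior at time `t`. -/
theorem total_information_bound {Ω S : Type*} [Fintype Ω]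
    (μ : Ω → ℝ) (hμ : ∀ ω, 0 ≤ μ ω) (hsum : ∑ ω, μ ω = 1)
    (d m T : ℕ) (hm : 1 ≤ m) (hmd : m ≤ d)
    (Astar : Ω → Fin d → Bool)
    (hsparse : ∀ ω, μ ω ≠ 0 →
      (Finset.univ.filter fun j => Astar ω j = true).card = m)
    (O : Fin T → Ω → S) :
    (∑ t, ∑ j, condMutInfo μ (fun ω => Astar ω j) (O t) (hist O t))
        ≤ ∑ j, binEnt (pr μ fun ω => Astar ω j = true) ∧
      (∑ j, binEnt (pr μ fun ω => Astar ω j = true))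
        ≤ (m : ℝ) * (Real.log ((d : ℝ) / m) + 1) :=
  total_information_bound_general μ hμ hsum d m T Astar hsparse O
end

section
/- In the Thompson sampling setting, for each period t, the one-period expected regret satisfies E_t[⟨A*, θ⟩ - ⟨A_t, θ⟩] ≤ sqrt( (d/2) · ∑_{j=1}^d (q_{j,t})^2 · KL( E_t[θ_j | A*_j = 1], E_t[θ_j] ) ), where q_{j,t} = P_t(A*_j = 1) and KL is Bernoulli KL divergence. -/
/-!
Expand `⟨A, θ⟩` coordinatewise. Because `A_t` is independent of `θ` and has the law of `A*`,
`E[⟨A_t, θ⟩] = ∑ⱼ qⱼ E[θⱼ]`, while `E[⟨A*, θ⟩] = ∑ⱼ qⱼ E[θⱼ | A*ⱼ = 1]`. Hence the regret is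
`∑ⱼ qⱼ (pⱼ - rⱼ)` with `pⱼ = E[θⱼ | A*ⱼ = 1]` and `rⱼ = E[θⱼ]`. Cauchy–Schwarz over the `d`
coordinates, followed by Pinsker's inequality `2 (p - r)² ≤ KL(p, r)` in each coordinate, gives
the bound. For Pinsker's inequality, note that `r ↦ KL(p, r) - 2 (p - r)²` has derivative
`(r - p) (1 / (r (1 - r)) - 4)`. Since `r (1 - r) ≤ 1/4`, this derivative has the sign of
`r - p`, so the function is minimal at `r = p`, where it vanishes.
-/

attribute [local instance] Classical.propDecidable

/-- Bernoulli Kullback–Leibler divergence. -/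
noncomputable def klBer (p q : ℝ) : ℝ :=
  p * Real.log (p / q) + (1 - p) * Real.log ((1 - p) / (1 - q))

/-- Reward of action `a` under parameter `v`: the inner product `⟨a, v⟩`. -/
noncomputable def reward {d : ℕ} (a : Fin d → Bool) (v : Fin d → ℝ) : ℝ :=
  ∑ j, if a j then v j else 0

open Real Set

lemma four_le_one_div_mul_one_sub {x : ℝ} (hx : x ∈ Ioo (0 : ℝ) 1) : 4 ≤ 1 / (x * (1 - x)) := by
  have hpos : 0 < x * (1 - x) := mul_pos hx.1 (by linarith [hx.2])
  rw [le_div_iff₀ hpos]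
  nlinarith [sq_nonneg (2 * x - 1)]

/-- `klBer p r - 2 (p - r) ^ 2`, with the logarithms split so that it is differentiable in `r`. -/
noncomputable def pinskerGap (p r : ℝ) : ℝ :=
  p * (log p - log r) + (1 - p) * (log (1 - p) - log (1 - r)) - 2 * (p - r) ^ 2

lemma hasDerivAt_pinskerGap (p : ℝ) {r : ℝ} (hr : r ∈ Ioo (0 : ℝ) 1) :
    HasDerivAt (pinskerGap p) ((r - p) * (1 / (r * (1 - r)) - 4)) r := by
  have hr0 : r ≠ 0 := hr.1.ne'
  have hr1 : 1 - r ≠ 0 := by linarith [hr.2]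
  have hlog := ((hasDerivAt_const r (log p)).fun_sub (hasDerivAt_log hr0)).const_mul p
  have hlog' := ((hasDerivAt_const r (log (1 - p))).fun_sub
    (((hasDerivAt_id' r).const_sub 1).log hr1)).const_mul (1 - p)
  have hsq := (((hasDerivAt_id' r).const_sub p).pow 2).const_mul 2
  refine ((hlog.fun_add hlog').fun_sub hsq).congr_deriv ?_
  field_simp
  ring

lemma isMinOn_pinskerGap {p : ℝ} (hp : p ∈ Ioo (0 : ℝ) 1) :
    IsMinOn (pinskerGap p) (Ioo 0 1) p := by
  have hderiv (x : ℝ) (hx : x ∈ Ioo (0 : ℝ) 1) := hasDerivAt_pinskerGap p hx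
  have hleft {x : ℝ} (hx : x ∈ Ioo 0 p) : x ∈ Ioo (0 : ℝ) 1 := ⟨hx.1, hx.2.trans hp.2⟩
  have hright {x : ℝ} (hx : x ∈ Ioo p 1) : x ∈ Ioo (0 : ℝ) 1 := ⟨hp.1.trans hx.1, hx.2⟩
  refine isMinOn_Ioo_of_deriv (hderiv p hp).continuousAt
    (fun x hx => (hderiv x (hleft hx)).differentiableAt.differentiableWithinAt)
    (fun x hx => (hderiv x (hright hx)).differentiableAt.differentiableWithinAt)
    (fun x hx => ?_) (fun x hx => ?_)
  · rw [(hderiv x (hleft hx)).deriv]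
    exact mul_nonpos_of_nonpos_of_nonneg (by linarith [hx.2])
      (by linarith [four_le_one_div_mul_one_sub (hleft hx)])
  · rw [(hderiv x (hright hx)).deriv]
    exact mul_nonneg (by linarith [hx.1]) (by linarith [four_le_one_div_mul_one_sub (hright hx)])

lemma two_mul_sq_sub_le_klBer {p r : ℝ} (hp : p ∈ Ioo (0 : ℝ) 1) (hr : r ∈ Ioo (0 : ℝ) 1) :
    2 * (p - r) ^ 2 ≤ klBer p r := by
  have hgap : klBer p r = pinskerGap p r + 2 * (p - r) ^ 2 := by
    rw [klBer, pinskerGap, log_div hp.1.ne' hr.1.ne',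
      log_div (by linarith [hp.2] : (1 : ℝ) - p ≠ 0) (by linarith [hr.2] : (1 : ℝ) - r ≠ 0)]
    ring
  have hmin : pinskerGap p p ≤ pinskerGap p r := isMinOn_iff.mp (isMinOn_pinskerGap hp) r hr
  have hzero : pinskerGap p p = 0 := by simp [pinskerGap]
  linarith

lemma sq_mul_sub_le_sq_mul_klBer {q p r : ℝ} (hp : q ≠ 0 → p ∈ Ioo (0 : ℝ) 1)
    (hr : r ∈ Ioo (0 : ℝ) 1) : (q * (p - r)) ^ 2 ≤ q ^ 2 * klBer p r / 2 := by
  rcases eq_or_ne q 0 with hq | hq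
  · simp [hq]
  · nlinarith [two_mul_sq_sub_le_klBer (hp hq) hr, sq_nonneg q]

section FiniteProbability

variable {Ω α β : Type*} [Fintype Ω] (μ : Ω → ℝ)

lemma pr_eq_sum_ite (E : Ω → Prop) [DecidablePred E] :
    pr μ E = ∑ ω, if E ω then μ ω else 0 :=
  Finset.sum_congr rfl fun _ _ => by congr

lemma sum_mul_comp_eq_sum_mul_pr (Z : Ω → α) (F : α → ℝ) {t : Finset α} (ht : ∀ ω, Z ω ∈ t) :
    ∑ ω, μ ω * F (Z ω) = ∑ z ∈ t, F z * pr μ (fun ω => Z ω = z) := by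
  rw [← Finset.sum_fiberwise_of_maps_to (g := Z) (fun ω _ => ht ω)]
  refine Finset.sum_congr rfl fun z _ => ?_
  rw [pr, Finset.mul_sum]
  simp only [mul_ite, mul_zero]
  rw [← Finset.sum_filter]
  exact Finset.sum_congr rfl fun ω hω => by rw [(Finset.mem_filter.mp hω).2, mul_comm]

lemma sum_mul_comp_eq_of_pr_eq {X Y : Ω → α}
    (hXY : ∀ a, pr μ (fun ω => X ω = a) = pr μ (fun ω => Y ω = a)) (g : α → ℝ) :
    ∑ ω, μ ω * g (X ω) = ∑ ω, μ ω * g (Y ω) := by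
  set t := Finset.univ.image X ∪ Finset.univ.image Y
  rw [sum_mul_comp_eq_sum_mul_pr μ X g (t := t) fun ω => by simp [t],
    sum_mul_comp_eq_sum_mul_pr μ Y g (t := t) fun ω => by simp [t]]
  simp only [hXY]

lemma sum_mul_mul_of_indep {X : Ω → α} {Y : Ω → β}
    (hind : ∀ a b, pr μ (fun ω => X ω = a ∧ Y ω = b)
      = pr μ (fun ω => X ω = a) * pr μ (fun ω => Y ω = b)) (g : α → ℝ) (h : β → ℝ) :
    ∑ ω, μ ω * (g (X ω) * h (Y ω)) = (∑ ω, μ ω * g (X ω)) * ∑ ω, μ ω * h (Y ω) := by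
  set s := Finset.univ.image X
  set t := Finset.univ.image Y
  have hs : ∀ ω, X ω ∈ s := fun ω => Finset.mem_image_of_mem X (Finset.mem_univ ω)
  have ht : ∀ ω, Y ω ∈ t := fun ω => Finset.mem_image_of_mem Y (Finset.mem_univ ω)
  rw [sum_mul_comp_eq_sum_mul_pr μ (fun ω => (X ω, Y ω)) (fun z => g z.1 * h z.2)
      (t := s ×ˢ t) (fun ω => Finset.mem_product.mpr ⟨hs ω, ht ω⟩),
    sum_mul_comp_eq_sum_mul_pr μ X g hs, sum_mul_comp_eq_sum_mul_pr μ Y h ht,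
    Finset.sum_product, Finset.sum_mul_sum]
  refine Finset.sum_congr rfl fun a _ => Finset.sum_congr rfl fun b _ => ?_
  simp only [Prod.mk.injEq, hind]
  ring

variable {μ} {w x : Ω → ℝ}

lemma sum_mul_pos (hw : ∀ ω, 0 ≤ w ω) (hx : ∀ ω, 0 < x ω) (hpos : 0 < ∑ ω, w ω) :
    0 < ∑ ω, w ω * x ω := by
  obtain ⟨ω₀, -, hω₀⟩ :=
    Finset.exists_lt_of_sum_lt (f := 0) (g := w) (s := Finset.univ) (by simpa using hpos)
  exact Finset.sum_pos' (fun ω _ => mul_nonneg (hw ω) (hx ω).le)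
    ⟨ω₀, Finset.mem_univ _, mul_pos hω₀ (hx ω₀)⟩

lemma sum_mul_mem_Ioo (hw : ∀ ω, 0 ≤ w ω) (hx : ∀ ω, x ω ∈ Ioo (0 : ℝ) 1)
    (hpos : 0 < ∑ ω, w ω) : ∑ ω, w ω * x ω ∈ Ioo 0 (∑ ω, w ω) := by
  refine ⟨sum_mul_pos hw (fun ω => (hx ω).1) hpos, sub_pos.mp ?_⟩
  have := sum_mul_pos hw (fun ω => sub_pos.mpr (hx ω).2) hpos
  simpa [mul_sub, Finset.sum_sub_distrib] using this

lemma sum_mul_eq_zero_of_sum_eq_zero (hw : ∀ ω, 0 ≤ w ω) (hzero : ∑ ω, w ω = 0) :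
    ∑ ω, w ω * x ω = 0 := by
  have hw0 := (Finset.sum_eq_zero_iff_of_nonneg fun ω _ => hw ω).mp hzero
  exact Finset.sum_eq_zero fun ω hω => by rw [hw0 ω hω, zero_mul]

variable (μ) (E : Ω → Prop) [DecidablePred E] (x : Ω → ℝ)

/-- `E_μ[x | E]`, which is `0` when `pr μ E = 0`. -/
noncomputable def condMean : ℝ :=
  (∑ ω, if E ω then μ ω * x ω else 0) / pr μ E

variable {μ E x}

lemma sum_ite_mul_eq_sum_mul :
    (∑ ω, if E ω then μ ω * x ω else 0) = ∑ ω, (if E ω then μ ω else 0) * x ω := by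
  simp only [ite_mul, zero_mul]

lemma pr_mul_condMean (hμ : ∀ ω, 0 ≤ μ ω) :
    pr μ E * condMean μ E x = ∑ ω, if E ω then μ ω * x ω else 0 := by
  refine mul_div_cancel_of_imp' fun hE => ?_
  rw [pr_eq_sum_ite] at hE
  rw [sum_ite_mul_eq_sum_mul, sum_mul_eq_zero_of_sum_eq_zero (fun ω => ?_) hE]
  split_ifs <;> simp [hμ]

lemma condMean_mem_Ioo (hμ : ∀ ω, 0 ≤ μ ω) (hx : ∀ ω, x ω ∈ Ioo (0 : ℝ) 1) (hE : pr μ E ≠ 0) :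
    condMean μ E x ∈ Ioo (0 : ℝ) 1 := by
  have hw : ∀ ω, 0 ≤ if E ω then μ ω else 0 := fun ω => by split_ifs <;> simp [hμ]
  rw [pr_eq_sum_ite] at hE
  have hpos : 0 < ∑ ω, if E ω then μ ω else 0 :=
    lt_of_le_of_ne (Finset.sum_nonneg fun ω _ => hw ω) (Ne.symm hE)
  obtain ⟨h0, h1⟩ := sum_mul_mem_Ioo hw hx hpos
  rw [condMean, pr_eq_sum_ite, sum_ite_mul_eq_sum_mul]
  exact ⟨div_pos h0 hpos, (div_lt_one hpos).mpr h1⟩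

end FiniteProbability

section Regret

variable {Ω : Type*} [Fintype Ω] (μ : Ω → ℝ) {d : ℕ} (θ : Ω → Fin d → ℝ)

lemma sum_mul_reward (B : Ω → Fin d → Bool) :
    ∑ ω, μ ω * reward (B ω) (θ ω) = ∑ j, ∑ ω, if B ω j = true then μ ω * θ ω j else 0 := by
  simp only [reward, Finset.mul_sum, mul_ite, mul_zero]
  exact Finset.sum_comm

lemma sum_mul_sub_reward_eq {Astar At : Ω → Fin d → Bool}
    (hthom : ∀ a, pr μ (fun ω => At ω = a) = pr μ (fun ω => Astar ω = a))
    (hind : ∀ a v, pr μ (fun ω => At ω = a ∧ θ ω = v)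
      = pr μ (fun ω => At ω = a) * pr μ (fun ω => θ ω = v)) :
    ∑ ω, μ ω * (reward (Astar ω) (θ ω) - reward (At ω) (θ ω))
      = ∑ j, ((∑ ω, if Astar ω j = true then μ ω * θ ω j else 0)
          - pr μ (fun ω => Astar ω j = true) * ∑ ω, μ ω * θ ω j) := by
  have hAt : ∀ j, (∑ ω, if At ω j = true then μ ω * θ ω j else 0)
      = pr μ (fun ω => Astar ω j = true) * ∑ ω, μ ω * θ ω j := by
    intro j
    have hind_j := sum_mul_mul_of_indep μ hind (fun a => if a j = true then 1 else 0) (· j)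
    have hlaw : (∑ ω, μ ω * if At ω j = true then 1 else 0)
        = ∑ ω, μ ω * if Astar ω j = true then 1 else 0 :=
      sum_mul_comp_eq_of_pr_eq μ hthom (fun a => if a j = true then 1 else 0)
    rw [hlaw] at hind_j
    simp only [ite_mul, one_mul, zero_mul, mul_ite, mul_one, mul_zero] at hind_j
    rw [hind_j, pr_eq_sum_ite]
  simp only [mul_sub, Finset.sum_sub_distrib, sum_mul_reward, hAt]

end Regret

/-- The sample space `Ω` with weights `μ` represents the posterior `P_t` at period `t`. -/
theorem one_period_regret_bound_general {Ω : Type*} [Fintype Ω]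
    (μ : Ω → ℝ) (hμ : ∀ ω, 0 ≤ μ ω) (hsum : ∑ ω, μ ω = 1)
    (d : ℕ)
    (θ : Ω → Fin d → ℝ) (hθ : ∀ ω j, θ ω j ∈ Set.Ioo (0:ℝ) 1)
    (Astar At : Ω → Fin d → Bool)
    -- Thompson sampling: `A_t` has the posterior distribution of `A*`:
    (hthom : ∀ a : Fin d → Bool,
      pr μ (fun ω => At ω = a) = pr μ (fun ω => Astar ω = a))
    -- `A_t` is drawn independently of `θ`:
    (hind : ∀ (a : Fin d → Bool) (v : Fin d → ℝ),
      pr μ (fun ω => At ω = a ∧ θ ω = v)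
        = pr μ (fun ω => At ω = a) * pr μ (fun ω => θ ω = v)) :
    ∑ ω, μ ω * (reward (Astar ω) (θ ω) - reward (At ω) (θ ω))
      ≤ Real.sqrt (((d : ℝ) / 2) *
          ∑ j, (pr μ fun ω => Astar ω j = true) ^ 2 *
            klBer ((∑ ω, if Astar ω j = true then μ ω * θ ω j else 0) /
                (pr μ fun ω => Astar ω j = true))
              (∑ ω, μ ω * θ ω j)) := by
  set q := fun j => pr μ fun ω => Astar ω j = true
  set p := fun j => condMean μ (fun ω => Astar ω j = true) (fun ω => θ ω j)
  set r := fun j => ∑ ω, μ ω * θ ω j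
  have hp : ∀ j, q j ≠ 0 → p j ∈ Ioo (0 : ℝ) 1 := fun j => condMean_mem_Ioo hμ (hθ · j)
  have hr : ∀ j, r j ∈ Ioo (0 : ℝ) 1 := fun j => by
    simpa [hsum] using sum_mul_mem_Ioo hμ (hθ · j) (by simp [hsum])
  have hCS :=
    sq_sum_le_card_mul_sum_sq (s := Finset.univ) (f := fun j : Fin d => q j * (p j - r j))
  calc ∑ ω, μ ω * (reward (Astar ω) (θ ω) - reward (At ω) (θ ω))
      = ∑ j, q j * (p j - r j) := by
        rw [sum_mul_sub_reward_eq μ θ hthom hind]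
        exact Finset.sum_congr rfl fun j _ => by rw [← pr_mul_condMean hμ, mul_sub]
    _ ≤ √((d : ℝ) * ∑ j, (q j * (p j - r j)) ^ 2) :=
        (le_abs_self _).trans (Real.abs_le_sqrt (by simpa using hCS))
    _ ≤ √((d : ℝ) / 2 * ∑ j, q j ^ 2 * klBer (p j) (r j)) := by
        refine Real.sqrt_le_sqrt ?_
        rw [div_mul_eq_mul_div, mul_div_assoc, Finset.sum_div]
        gcongr with j
        exact sq_mul_sub_le_sq_mul_klBer (hp j) (hr j)

/-- Lemma 1: one-period expected regret of Thompson sampling is bounded by the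
component-wise information term.  The sample space `Ω` with weights `μ` represents
the posterior `P_t` at period `t`. -/
theorem one_period_regret_bound {Ω : Type*} [Fintype Ω]
    (μ : Ω → ℝ) (hμ : ∀ ω, 0 ≤ μ ω) (hsum : ∑ ω, μ ω = 1)
    (d m : ℕ) (hm : 1 ≤ m) (hmd : m ≤ d)
    (Acts : Finset (Fin d → Bool)) (hne : Acts.Nonempty)
    (hsparse : ∀ a ∈ Acts, (Finset.univ.filter fun j => a j = true).card = m)
    (θ : Ω → Fin d → ℝ) (hθ : ∀ ω j, θ ω j ∈ Set.Ioo (0:ℝ) 1)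
    (Astar At : Ω → Fin d → Bool)
    -- `A*` maximizes `⟨a, θ⟩` over the feasible set, almost surely:
    (hopt : ∀ ω, μ ω ≠ 0 →
      Astar ω ∈ Acts ∧ ∀ a ∈ Acts, reward a (θ ω) ≤ reward (Astar ω) (θ ω))
    -- Thompson sampling: `A_t` has the posterior distribution of `A*`:
    (hthom : ∀ a : Fin d → Bool,
      pr μ (fun ω => At ω = a) = pr μ (fun ω => Astar ω = a))
    -- `A_t` is drawn independently of `θ`:
    (hind : ∀ (a : Fin d → Bool) (v : Fin d → ℝ),
      pr μ (fun ω => At ω = a ∧ θ ω = v)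
        = pr μ (fun ω => At ω = a) * pr μ (fun ω => θ ω = v)) :
    ∑ ω, μ ω * (reward (Astar ω) (θ ω) - reward (At ω) (θ ω))
      ≤ Real.sqrt (((d : ℝ) / 2) *
          ∑ j, (pr μ fun ω => Astar ω j = true) ^ 2 *
            klBer ((∑ ω, if Astar ω j = true then μ ω * θ ω j else 0) /
                (pr μ fun ω => Astar ω j = true))
              (∑ ω, μ ω * θ ω j)) :=
  one_period_regret_bound_general μ hμ hsum d θ hθ Astar At hthom hind
end
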